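/- Assume each A_k is invertible and each B_k has full column rank. Then there exists ε̄ > 0 such that for every temperature parameter ε with 0 < ε < ε̄, the matrix M̌_k is symmetric positive definite for every k = 0,…,T−1. (Note that Π̌_k and Π̂_k do not depend on ε, so only the last term of M̌_k depends on ε.) -/

import Mathlib

open Matrix Filter Topology

/-- The unique symmetric positive semidefinite square root of a positive
semidefinite real matrix (junk value `0` if the matrix is not PSD). -/
noncomputable def msqrt {d : ℕ} (X : Matrix (Fin d) (Fin d) ℝ) :
    Matrix (Fin d) (Fin d) ℝ :=
  letI := Classical.propDecidable X.PosSemidef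
  if h : X.PosSemidef then
    (h.1.eigenvectorUnitary : Matrix (Fin d) (Fin d) ℝ) *
      diagonal ((RCLike.ofReal : ℝ → ℝ) ∘ Real.sqrt ∘ h.1.eigenvalues) *
      (star h.1.eigenvectorUnitary : Matrix (Fin d) (Fin d) ℝ)
  else 0

/-- The Frobenius norm of a real square matrix. -/
noncomputable def frob {d : ℕ} (X : Matrix (Fin d) (Fin d) ℝ) : ℝ :=
  Real.sqrt (∑ i, ∑ j, X i j ^ 2)

/-- Data of the mutual information optimal control problem for a discrete-time
linear system `x_{k+1} = A_k x_k + B_k u_k + w_k`. -/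
structure LQData (n m : ℕ) where
  ε : ℝ
  A : ℕ → Matrix (Fin n) (Fin n) ℝ
  B : ℕ → Matrix (Fin n) (Fin m) ℝ
  R : ℕ → Matrix (Fin m) (Fin m) ℝ
  F : Matrix (Fin n) (Fin n) ℝ
  Sw : ℕ → Matrix (Fin n) (Fin n) ℝ
  Sini : Matrix (Fin n) (Fin n) ℝ

namespace LQData

variable {n m : ℕ} (P : LQData n m) (T : ℕ) (Srho : ℕ → Matrix (Fin m) (Fin m) ℝ)

/-- The backward Riccati recursion `Π_k` associated with the prior covariances
`Σ_{ρ_k}`: `Π_T = F` and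
`Π_k = A_kᵀ Π_{k+1} A_k − (1/ε) A_kᵀ Π_{k+1} B_k Σ^{1/2} (I + Σ^{1/2} C_k Σ^{1/2})⁻¹ Σ^{1/2} B_kᵀ Π_{k+1} A_k`
with `C_k = (R_k + B_kᵀ Π_{k+1} B_k)/ε`. -/
noncomputable def Ric (k : ℕ) : Matrix (Fin n) (Fin n) ℝ :=
  if h : T ≤ k then P.F
  else
    let Pk := Ric (k + 1)
    let S := msqrt (Srho k)
    let C := (1 / P.ε) • (P.R k + (P.B k)ᵀ * Pk * P.B k)
    (P.A k)ᵀ * Pk * P.A k -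
      (1 / P.ε) • ((P.A k)ᵀ * Pk * P.B k * S * (1 + S * C * S)⁻¹ * S * (P.B k)ᵀ * Pk * P.A k)
termination_by T - k
decreasing_by omega

/-- `C_k = (R_k + B_kᵀ Π_{k+1} B_k)/ε`. -/
noncomputable def Ck (k : ℕ) : Matrix (Fin m) (Fin m) ℝ :=
  (1 / P.ε) • (P.R k + (P.B k)ᵀ * P.Ric T Srho (k + 1) * P.B k)

/-- `Σ_{Q_k} = ε (R_k + B_kᵀ Π_{k+1} B_k)⁻¹`. -/
noncomputable def SigQ (k : ℕ) : Matrix (Fin m) (Fin m) ℝ :=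
  P.ε • (P.R k + (P.B k)ᵀ * P.Ric T Srho (k + 1) * P.B k)⁻¹

/-- Covariance `Σ_{π_k}` of the optimal policy for the fixed prior. -/
noncomputable def SigPi (k : ℕ) : Matrix (Fin m) (Fin m) ℝ :=
  msqrt (Srho k) * (1 + msqrt (Srho k) * P.Ck T Srho k * msqrt (Srho k))⁻¹ * msqrt (Srho k)

/-- Feedback gain `P_k = −(1/ε) Σ_{π_k} B_kᵀ Π_{k+1} A_k`. -/
noncomputable def Pgain (k : ℕ) : Matrix (Fin m) (Fin n) ℝ :=
  -((1 / P.ε) • (P.SigPi T Srho k * (P.B k)ᵀ * P.Ric T Srho (k + 1) * P.A k))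

/-- Forward state covariance recursion under the optimal policy. -/
noncomputable def Sigx : ℕ → Matrix (Fin n) (Fin n) ℝ
  | 0 => P.Sini
  | k + 1 =>
    (P.A k + P.B k * P.Pgain T Srho k) * Sigx k *
        (P.A k + P.B k * P.Pgain T Srho k)ᵀ +
      P.B k * P.SigPi T Srho k * (P.B k)ᵀ + P.Sw k

/-- The standard LQR Riccati recursion `Π̌_k`. -/
noncomputable def RicLQR (k : ℕ) : Matrix (Fin n) (Fin n) ℝ :=
  if h : T ≤ k then P.F
  else
    let Pk := RicLQR (k + 1)
    (P.A k)ᵀ * Pk * P.A k -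
      (P.A k)ᵀ * Pk * P.B k * (P.R k + (P.B k)ᵀ * Pk * P.B k)⁻¹ * (P.B k)ᵀ * Pk * P.A k
termination_by T - k
decreasing_by omega

/-- `Π̂_k = A_kᵀ ⋯ A_{T−1}ᵀ F A_{T−1} ⋯ A_k`. -/
noncomputable def RicHat (k : ℕ) : Matrix (Fin n) (Fin n) ℝ :=
  if h : T ≤ k then P.F
  else (P.A k)ᵀ * RicHat (k + 1) * P.A k
termination_by T - k
decreasing_by omega

/-- `Σ_{w_{k−1}}` with the convention `Σ_{w_{−1}} := Σ_{x_ini}`. -/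
noncomputable def Swm1 (k : ℕ) : Matrix (Fin n) (Fin n) ℝ :=
  if k = 0 then P.Sini else P.Sw (k - 1)

/-- The matrix `M̌_k` from the sufficient condition for stochastic optimal policies. -/
noncomputable def Mcheck (k : ℕ) : Matrix (Fin m) (Fin m) ℝ :=
  (P.R k + (P.B k)ᵀ * P.RicHat T (k + 1) * P.B k)⁻¹ *
      ((P.B k)ᵀ * P.RicLQR T (k + 1) * P.A k * P.Swm1 k * (P.A k)ᵀ *
        P.RicLQR T (k + 1) * P.B k) *
      (P.R k + (P.B k)ᵀ * P.RicHat T (k + 1) * P.B k)⁻¹ -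
    P.ε • (P.R k + (P.B k)ᵀ * P.RicLQR T (k + 1) * P.B k)⁻¹

/-- State covariance under the zero control input. -/
noncomputable def SigxZero : ℕ → Matrix (Fin n) (Fin n) ℝ
  | 0 => P.Sini
  | k + 1 => P.A k * SigxZero k * (P.A k)ᵀ + P.Sw k

/-- The matrix `M̂_k^zero` from the sufficient condition for deterministic optimal policies. -/
noncomputable def MhatZero (k : ℕ) : Matrix (Fin m) (Fin m) ℝ :=
  (P.R k + (P.B k)ᵀ * P.RicLQR T (k + 1) * P.B k)⁻¹ *
      ((P.B k)ᵀ * P.RicHat T (k + 1) * P.A k * P.SigxZero k * (P.A k)ᵀ *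
        P.RicHat T (k + 1) * P.B k) *
      (P.R k + (P.B k)ᵀ * P.RicLQR T (k + 1) * P.B k)⁻¹ -
    P.ε • (P.R k + (P.B k)ᵀ * P.RicHat T (k + 1) * P.B k)⁻¹


/-- The backward recursion `r_k` for the mean offset:
`r_T = 0` and `r_k = A_k⁻¹ r_{k+1} − Π_k⁻¹ A_kᵀ Π_{k+1} B_k (I + Σ_{ρ_k} C_k)⁻¹ μ_{ρ_k}`. -/
noncomputable def rvec (μ : ℕ → Fin m → ℝ) (k : ℕ) : Fin n → ℝ :=
  if h : T ≤ k then 0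
  else
    ((P.A k)⁻¹).mulVec (rvec μ (k + 1)) -
      ((P.Ric T Srho k)⁻¹ * ((P.A k)ᵀ * P.Ric T Srho (k + 1) * P.B k *
        (1 + Srho k * P.Ck T Srho k)⁻¹)).mulVec (μ k)
termination_by T - k
decreasing_by omega

/-- `Θ_k = ε C_k − ε C_k Σ_{π_k} C_k − (I − C_k Σ_{π_k}) B_kᵀ Π_{k+1} A_k Π_k⁻¹ A_kᵀ Π_{k+1} B_k (I − Σ_{π_k} C_k)`. -/
noncomputable def Theta (k : ℕ) : Matrix (Fin m) (Fin m) ℝ :=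
  P.ε • P.Ck T Srho k - P.ε • (P.Ck T Srho k * P.SigPi T Srho k * P.Ck T Srho k) -
    (1 - P.Ck T Srho k * P.SigPi T Srho k) *
      ((P.B k)ᵀ * P.Ric T Srho (k + 1) * P.A k * (P.Ric T Srho k)⁻¹ *
        ((P.A k)ᵀ * P.Ric T Srho (k + 1) * P.B k)) *
      (1 - P.SigPi T Srho k * P.Ck T Srho k)

end LQData

/-- Extend a `T`-tuple of matrices to a function on `ℕ` (by zero). -/
def extT {m : ℕ} (T : ℕ) (σ : Fin T → Matrix (Fin m) (Fin m) ℝ) :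
    ℕ → Matrix (Fin m) (Fin m) ℝ :=
  fun k => if h : k < T then σ ⟨k, h⟩ else 0


/-- Extend a `T`-tuple of vectors to a function on `ℕ` (by zero). -/
def extV {m : ℕ} (T : ℕ) (μ : Fin T → Fin m → ℝ) : ℕ → Fin m → ℝ :=
  fun k => if h : k < T then μ ⟨k, h⟩ else 0

namespace LQData

variable {n m : ℕ} (P : LQData n m) (T : ℕ)

/-- The reduced objective `J̌` as a function of the `T`-tuple of prior covariances. -/
noncomputable def Jcheck (σ : Fin T → Matrix (Fin m) (Fin m) ℝ) : ℝ :=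
  (1 / 2) * ((P.Ric T (extT T σ) 0 * P.Sini).trace +
    ∑ k : Fin T,
      (P.ε * Real.log ((extT T σ k + P.SigQ T (extT T σ) k).det / (P.SigQ T (extT T σ) k).det) +
        (P.Ric T (extT T σ) (k + 1) * P.Sw k).trace))

/-- `L_k = (Σ_{Q_k} + Σ_{ρ_k})⁻¹`. -/
noncomputable def Lmat (Srho : ℕ → Matrix (Fin m) (Fin m) ℝ) (k : ℕ) :
    Matrix (Fin m) (Fin m) ℝ :=
  (P.SigQ T Srho k + Srho k)⁻¹

/-- `E_k = (1/ε) Σ_{Q_k} B_kᵀ Π_{k+1} A_k`. -/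
noncomputable def Emat (Srho : ℕ → Matrix (Fin m) (Fin m) ℝ) (k : ℕ) :
    Matrix (Fin m) (Fin n) ℝ :=
  (1 / P.ε) • (P.SigQ T Srho k * (P.B k)ᵀ * P.Ric T Srho (k + 1) * P.A k)

/-- `J̌'_k = (ε/2) L_k (Σ_{ρ_k} + Σ_{Q_k} − E_k Σ_{x_k} E_kᵀ) L_k`. -/
noncomputable def Jprime (Srho : ℕ → Matrix (Fin m) (Fin m) ℝ) (k : ℕ) :
    Matrix (Fin m) (Fin m) ℝ :=
  (P.ε / 2) • (P.Lmat T Srho k *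
    (Srho k + P.SigQ T Srho k - P.Emat T Srho k * P.Sigx T Srho k * (P.Emat T Srho k)ᵀ) *
    P.Lmat T Srho k)

/-- The alternating-optimization update map `𝒯` on `T`-tuples of prior covariances:
`𝒯(σ)_k = Σ_{π_k} + P_k Σ_{x_k} P_kᵀ`. -/
noncomputable def Tmap (σ : Fin T → Matrix (Fin m) (Fin m) ℝ) :
    Fin T → Matrix (Fin m) (Fin m) ℝ :=
  fun k =>
    P.SigPi T (extT T σ) k +
      P.Pgain T (extT T σ) k * P.Sigx T (extT T σ) k * (P.Pgain T (extT T σ) k)ᵀ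

/-- The objective `J` as a function of the prior means, for fixed prior covariances:
`J(μ) = (1/2)( r_0ᵀ Π_0 r_0 + Σ_k μ_{ρ_k}ᵀ Θ_k μ_{ρ_k} )`. -/
noncomputable def Jmean (Srho : ℕ → Matrix (Fin m) (Fin m) ℝ) (μ : Fin T → Fin m → ℝ) : ℝ :=
  (1 / 2) *
    (P.rvec T Srho (extV T μ) 0 ⬝ᵥ (P.Ric T Srho 0).mulVec (P.rvec T Srho (extV T μ) 0) +
      ∑ k : Fin T, μ k ⬝ᵥ (P.Theta T Srho k).mulVec (μ k))

end LQData

open Matrix Filter Topology LQData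

/-!
The Riccati update `Π ↦ Π − ΠB(R + BᵀΠB)⁻¹BᵀΠ` equals `(Π⁻¹ + BR⁻¹Bᵀ)⁻¹` by the Woodbury
identity, so it preserves positive definiteness; congruence by the invertible `A_k` then shows
that every `Π̌_k` is positive definite. Hence `A_kᵀ Π̌_{k+1} B_k` is injective, and the `ε`-free
part of `M̌_k` is a congruence of `Σ_{w_{k−1}}` by an injective map, so it is positive definite.
Subtracting `ε` times a fixed symmetric matrix keeps a positive definite matrix positive definite
for all small `ε` (compactness of the unit sphere), and there are only finitely many `k`.
-/

namespace Matrix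

variable {ι κ : Type*} [Fintype ι] [Fintype κ]

theorem PosDef.transpose_mul_mul_same {S : Matrix ι ι ℝ} (hS : S.PosDef) {D : Matrix ι κ ℝ}
    (hD : Function.Injective D.mulVec) : (Dᵀ * S * D).PosDef := by
  simpa only [conjTranspose_eq_transpose_of_trivial] using hS.conjTranspose_mul_mul_same hD

theorem PosSemidef.transpose_mul_mul_same {S : Matrix ι ι ℝ} (hS : S.PosSemidef)
    (D : Matrix ι κ ℝ) : (Dᵀ * S * D).PosSemidef := by
  simpa only [conjTranspose_eq_transpose_of_trivial] using hS.conjTranspose_mul_mul_same D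

theorem PosDef.riccati_update [DecidableEq ι] [DecidableEq κ] {S : Matrix ι ι ℝ}
    {R : Matrix κ κ ℝ} (hS : S.PosDef) (hR : R.PosDef) (B : Matrix ι κ ℝ) :
    (S - S * B * (R + Bᵀ * S * B)⁻¹ * Bᵀ * S).PosDef := by
  have hN : (R + Bᵀ * S * B).PosDef := hR.add_posSemidef (hS.posSemidef.transpose_mul_mul_same B)
  have hS_inv_inv := nonsing_inv_nonsing_inv S ((isUnit_iff_isUnit_det S).mp hS.isUnit)
  have hR_inv_inv := nonsing_inv_nonsing_inv R ((isUnit_iff_isUnit_det R).mp hR.isUnit)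
  have woodbury : (S⁻¹ + B * R⁻¹ * Bᵀ)⁻¹ = S - S * B * (R + Bᵀ * S * B)⁻¹ * Bᵀ * S := by
    rw [add_mul_mul_inv_eq_sub _ _ _ _ hS.inv.isUnit hR.inv.isUnit
      (by rw [hS_inv_inv, hR_inv_inv]; exact hN.isUnit), hS_inv_inv, hR_inv_inv]
  rw [← woodbury]
  refine (hS.inv.add_posSemidef ?_).inv
  simpa only [conjTranspose_eq_transpose_of_trivial] using
    hR.inv.posSemidef.mul_mul_conjTranspose_same B

theorem PosDef.eventually_sub_smul {G H : Matrix ι ι ℝ} (hG : G.PosDef) (hH : H.IsHermitian) :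
    ∀ᶠ ε in 𝓝 (0 : ℝ), (G - ε • H).PosDef := by
  set q : ℝ → (ι → ℝ) → ℝ := fun ε x => x ⬝ᵥ (G - ε • H) *ᵥ x with hq_def
  have hq : Continuous fun p : ℝ × (ι → ℝ) => q p.1 p.2 := by
    simp only [hq_def, mulVec, dotProduct]
    fun_prop
  have hsphere : ∀ᶠ ε in 𝓝 0, ∀ y ∈ Metric.sphere (0 : ι → ℝ) 1, 0 < q ε y := by
    refine (isCompact_sphere 0 1).eventually_forall_of_forall_eventually fun y hy => ?_
    have hpos : 0 < q 0 y := by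
      simpa [hq_def] using hG.dotProduct_mulVec_pos (ne_zero_of_mem_unit_sphere ⟨y, hy⟩)
    exact (hq.tendsto (0, y)).eventually (lt_mem_nhds hpos)
  filter_upwards [hsphere] with ε hε
  refine PosDef.of_dotProduct_mulVec_pos (hG.1.sub (hH.smul (IsSelfAdjoint.all ε))) fun x hx => ?_
  have hnx : ‖x‖ ≠ 0 := norm_ne_zero_iff.mpr hx
  have hscale : q ε x = ‖x‖ ^ 2 * q ε (‖x‖⁻¹ • x) := by
    simp only [hq_def, mulVec_smul, dotProduct_smul, smul_dotProduct, smul_eq_mul]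
    field_simp
  rw [star_trivial]
  change 0 < q ε x
  rw [hscale]
  refine mul_pos (by positivity) (hε _ ?_)
  rw [mem_sphere_zero_iff_norm, norm_smul, norm_inv, norm_norm, inv_mul_cancel₀ hnx]

end Matrix

namespace LQData

variable {n m : ℕ} (P : LQData n m) (T : ℕ)

theorem RicLQR_withEps (ε : ℝ) (k : ℕ) :
    ({ P with ε := ε } : LQData n m).RicLQR T k = P.RicLQR T k := by
  induction k using RicLQR.induct P T with
  | case1 k hk => rw [RicLQR.eq_def, dif_pos hk, RicLQR.eq_def P, dif_pos hk]
  | case2 k hk ih => rw [RicLQR.eq_def, dif_neg hk, RicLQR.eq_def P, dif_neg hk, ih]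

theorem RicHat_withEps (ε : ℝ) (k : ℕ) :
    ({ P with ε := ε } : LQData n m).RicHat T k = P.RicHat T k := by
  induction k using RicHat.induct T with
  | case1 k hk => rw [RicHat.eq_def, dif_pos hk, RicHat.eq_def P, dif_pos hk]
  | case2 k hk ih => rw [RicHat.eq_def, dif_neg hk, RicHat.eq_def P, dif_neg hk, ih]

variable {P T}

theorem RicLQR_posDef (hA : ∀ k < T, IsUnit (P.A k)) (hR : ∀ k < T, (P.R k).PosDef)
    (hF : P.F.PosDef) (k : ℕ) : (P.RicLQR T k).PosDef := by
  induction k using RicLQR.induct P T with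
  | case1 k hk => rwa [RicLQR.eq_def, dif_pos hk]
  | case2 k hk ih =>
    rw [RicLQR.eq_def, dif_neg hk]
    simpa only [Matrix.mul_sub, Matrix.sub_mul, Matrix.mul_assoc] using
      (ih.riccati_update (hR k (not_le.mp hk)) (P.B k)).transpose_mul_mul_same
        (Matrix.mulVec_injective_iff_isUnit.mpr (hA k (not_le.mp hk)))

theorem RicHat_posSemidef (hF : P.F.PosSemidef) (k : ℕ) : (P.RicHat T k).PosSemidef := by
  induction k using RicHat.induct T with
  | case1 k hk => rwa [RicHat.eq_def, dif_pos hk]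
  | case2 k hk ih => rw [RicHat.eq_def, dif_neg hk]; exact ih.transpose_mul_mul_same (P.A k)

theorem Swm1_posDef (hSw : ∀ k < T, (P.Sw k).PosDef) (hSini : P.Sini.PosDef) {k : ℕ}
    (hk : k < T) : (P.Swm1 k).PosDef := by
  unfold Swm1
  split_ifs with h0
  · exact hSini
  · exact hSw (k - 1) (by omega)

theorem eventually_Mcheck_posDef (hA : ∀ k < T, IsUnit (P.A k))
    (hB : ∀ k < T, Function.Injective (P.B k).mulVec) (hR : ∀ k < T, (P.R k).PosDef)
    (hSw : ∀ k < T, (P.Sw k).PosDef) (hF : P.F.PosDef) (hSini : P.Sini.PosDef) {k : ℕ}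
    (hk : k < T) : ∀ᶠ ε in 𝓝 0, (({ P with ε := ε } : LQData n m).Mcheck T k).PosDef := by
  set S := P.RicLQR T (k + 1)
  set N := P.R k + (P.B k)ᵀ * P.RicHat T (k + 1) * P.B k
  have hS : S.PosDef := RicLQR_posDef hA hR hF (k + 1)
  have hN : N.PosDef := (hR k hk).add_posSemidef
    ((RicHat_posSemidef hF.posSemidef (k + 1)).transpose_mul_mul_same (P.B k))
  have hNc : (P.R k + (P.B k)ᵀ * S * P.B k).PosDef :=
    (hR k hk).add_posSemidef (hS.posSemidef.transpose_mul_mul_same (P.B k))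
  have hD : Function.Injective ((P.A k)ᵀ * S * P.B k * N⁻¹).mulVec := by
    have hcomp : ((P.A k)ᵀ * S * P.B k * N⁻¹).mulVec =
        ((P.A k)ᵀ * S).mulVec ∘ (P.B k).mulVec ∘ N⁻¹.mulVec := by
      funext x
      simp only [Function.comp_apply, mulVec_mulVec, Matrix.mul_assoc]
    rw [hcomp]
    refine .comp (mulVec_injective_iff_isUnit.mpr ?_) ((hB k hk).comp
      (mulVec_injective_iff_isUnit.mpr hN.inv.isUnit))
    exact ((isUnit_transpose (P.A k)).mpr (hA k hk)).mul hS.isUnit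
  have hfirst : (N⁻¹ * ((P.B k)ᵀ * S * P.A k * P.Swm1 k * (P.A k)ᵀ * S * P.B k) * N⁻¹).PosDef := by
    convert (Swm1_posDef hSw hSini hk).transpose_mul_mul_same hD using 1
    simp only [transpose_mul, transpose_transpose, (isHermitian_iff_isSymm.mp hS.isHermitian).eq,
      (isHermitian_iff_isSymm.mp hN.inv.isHermitian).eq, Matrix.mul_assoc]
  filter_upwards [hfirst.eventually_sub_smul hNc.inv.isHermitian] with ε hε
  rwa [Mcheck, RicLQR_withEps, RicHat_withEps]

end LQData

theorem mcheck_posDef_small_eps_general {n m : ℕ} (T : ℕ)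
    (P : LQData n m)
    (hA : ∀ k < T, IsUnit (P.A k))
    (hB : ∀ k < T, Function.Injective (P.B k).mulVec)
    (hR : ∀ k < T, (P.R k).PosDef) (hSw : ∀ k < T, (P.Sw k).PosDef)
    (hF : P.F.PosDef) (hSini : P.Sini.PosDef) :
    ∃ εbar : ℝ, 0 < εbar ∧ ∀ ε : ℝ, 0 < ε → ε < εbar →
      ∀ k < T, (({ P with ε := ε } : LQData n m).Mcheck T k).PosDef := by
  have hall : ∀ᶠ ε in 𝓝 0, ∀ k ∈ Finset.range T,
      (({ P with ε := ε } : LQData n m).Mcheck T k).PosDef :=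
    (Filter.eventually_all_finset _).mpr fun k hk =>
      eventually_Mcheck_posDef hA hB hR hSw hF hSini (Finset.mem_range.mp hk)
  obtain ⟨εbar, hεbar, hball⟩ := Metric.eventually_nhds_iff.mp hall
  refine ⟨εbar, hεbar, fun ε hε hεlt k hk => hball ?_ k (Finset.mem_range.mpr hk)⟩
  rwa [Real.dist_0_eq_abs, abs_of_pos hε]

theorem mcheck_posDef_small_eps {n m : ℕ} (hn : 1 ≤ n) (hm : 1 ≤ m) (T : ℕ) (hT : 1 ≤ T)
    (P : LQData n m)
    (hA : ∀ k < T, IsUnit (P.A k))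
    (hB : ∀ k < T, Function.Injective (P.B k).mulVec)
    (hR : ∀ k < T, (P.R k).PosDef) (hSw : ∀ k < T, (P.Sw k).PosDef)
    (hF : P.F.PosDef) (hSini : P.Sini.PosDef) :
    ∃ εbar : ℝ, 0 < εbar ∧ ∀ ε : ℝ, 0 < ε → ε < εbar →
      ∀ k < T, (({ P with ε := ε } : LQData n m).Mcheck T k).PosDef :=
  mcheck_posDef_small_eps_general T P hA hB hR hSw hF hSini
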